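/- arXiv:2505.23318 — 2 statements merged into one kernel-verified Lean document; each statement's English description precedes it below -/
import Mathlib

section
/- Let g be a combinatorially hyperbolic isometry of a simply connected cubical complex X, let v be a vertex realizing the minimal displacement |g|, and let α be a combinatorial geodesic in the 1-skeleton from v to g(v). Then the bi-infinite concatenation γ of the paths g^n(α) for n ∈ ℤ is a |g|-local geodesic: for all integers a, b with |a − b| ≤ |g|, the combinatorial distance d(γ(a), γ(b)) equals |a − b|. In particular every vertex of γ lies in the minimal displacement set Min_X(g). -/
open SimpleGraph

open Classical in
/-- A collection of faces is flag if every finite set of vertices of the complex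
that are pairwise joined by edges spans a face. -/
def FlagFaces {V : Type*} (K : Set (Finset V)) : Prop :=
  ∀ s : Finset V, (∀ u ∈ s, ({u} : Finset V) ∈ K) →
    (∀ u ∈ s, ∀ w ∈ s, u ≠ w → ({u, w} : Finset V) ∈ K) → s ∈ K

/-- A combinatorial model of a cubical complex: a simple graph (its 1-skeleton)
together with, for each `n`, the collection of vertex sets of its `n`-cubes. -/
structure CubicalCplx (V : Type*) where
  G : SimpleGraph V
  Cubes : ℕ → Set (Set V)
  edge_struct : ∀ Q ∈ Cubes 1, ∃ a b : V, G.Adj a b ∧ Q = {a, b}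
  edge_mem : ∀ {a b : V}, G.Adj a b → ({a, b} : Set V) ∈ Cubes 1
  sq_struct : ∀ Q ∈ Cubes 2, ∃ a b c d : V, Q = {a, b, c, d} ∧
    G.Adj a b ∧ G.Adj b c ∧ G.Adj c d ∧ G.Adj d a ∧ ¬ G.Adj a c ∧ ¬ G.Adj b d

namespace CubicalCplx

variable {V : Type*}

/-- Faces of the link of the vertex `v`: a finite set `s` spans a face of
`Lk(v, X)` iff its members are neighbours of `v` lying in a common cube
containing `v`. -/
def linkFaces (X : CubicalCplx V) (v : V) : Set (Finset V) :=
  { s | (∀ u ∈ s, X.G.Adj v u) ∧ ∃ n, ∃ Q ∈ X.Cubes n, v ∈ Q ∧ ↑s ⊆ Q }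

/-- Elementary homotopy moves on edge paths: removing a backtrack or pushing
across a square, anywhere along the path. -/
inductive HStep (X : CubicalCplx V) : ∀ {x y : V}, X.G.Walk x y → X.G.Walk x y → Prop
  | backtrack {x y z : V} (h : X.G.Adj x z) (p : X.G.Walk x y) :
      HStep X (Walk.cons h (Walk.cons h.symm p)) p
  | square {x a b y w : V} (hxa : X.G.Adj x a) (hay : X.G.Adj a y)
      (hxb : X.G.Adj x b) (hby : X.G.Adj b y)
      (hsq : ({x, a, y, b} : Set V) ∈ X.Cubes 2) (p : X.G.Walk y w) :
      HStep X (Walk.cons hxa (Walk.cons hay p)) (Walk.cons hxb (Walk.cons hby p))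
  | cons {x y z : V} (h : X.G.Adj x y) {p q : X.G.Walk y z} :
      HStep X p q → HStep X (Walk.cons h p) (Walk.cons h q)

/-- Combinatorial homotopy of edge paths. -/
def Homotopic (X : CubicalCplx V) {x y : V} (p q : X.G.Walk x y) : Prop :=
  Relation.EqvGen (fun p q : X.G.Walk x y => X.HStep p q) p q

/-- A cubical complex is simply connected if every closed edge path is
homotopic (through backtracks and squares) to the constant path. -/
def SimplyConnected (X : CubicalCplx V) : Prop :=
  ∀ (x : V) (p : X.G.Walk x x), X.Homotopic p Walk.nil

/-- Gromov's criterion: a cubical complex is CAT(0) iff it is connected,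
simply connected and all its vertex links are flag. -/
def IsCAT0 (X : CubicalCplx V) : Prop :=
  X.G.Connected ∧ X.SimplyConnected ∧ ∀ v : V, FlagFaces (X.linkFaces v)

/-- The full subcomplex of `X` spanned by the vertex set `A`. -/
def restrict (X : CubicalCplx V) (A : Set V) : CubicalCplx A where
  G := X.G.induce A
  Cubes := fun n => { Q | Subtype.val '' Q ∈ X.Cubes n }
  edge_struct := by
    rintro Q hQ
    obtain ⟨a, b, hab, hQ'⟩ := X.edge_struct _ hQ
    have ha : a ∈ Subtype.val '' Q := by rw [hQ']; simp
    have hb : b ∈ Subtype.val '' Q := by rw [hQ']; simp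
    obtain ⟨a', ha', rfl⟩ := ha
    obtain ⟨b', hb', rfl⟩ := hb
    refine ⟨a', b', hab, Set.image_injective.mpr Subtype.val_injective ?_⟩
    rw [hQ', Set.image_pair]
  edge_mem := by
    rintro a b hab
    have h : Subtype.val '' ({a, b} : Set A) = {(a : V), (b : V)} := Set.image_pair _ _ _
    rw [Set.mem_setOf_eq, h]
    exact X.edge_mem hab
  sq_struct := by
    rintro Q hQ
    obtain ⟨a, b, c, d, hQ', h1, h2, h3, h4, h5, h6⟩ := X.sq_struct _ hQ
    have ha : a ∈ Subtype.val '' Q := by rw [hQ']; simp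
    have hb : b ∈ Subtype.val '' Q := by rw [hQ']; simp
    have hc : c ∈ Subtype.val '' Q := by rw [hQ']; simp
    have hd : d ∈ Subtype.val '' Q := by rw [hQ']; simp
    obtain ⟨a', ha', rfl⟩ := ha
    obtain ⟨b', hb', rfl⟩ := hb
    obtain ⟨c', hc', rfl⟩ := hc
    obtain ⟨d', hd', rfl⟩ := hd
    refine ⟨a', b', c', d', Set.image_injective.mpr Subtype.val_injective ?_,
      h1, h2, h3, h4, h5, h6⟩
    rw [hQ']
    simp [Set.image_insert_eq]

/-- An automorphism of a cubical complex. -/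
structure Auto (X : CubicalCplx V) where
  toEquiv : V ≃ V
  adj : ∀ a b : V, X.G.Adj (toEquiv a) (toEquiv b) ↔ X.G.Adj a b
  cubes : ∀ (n : ℕ) (Q : Set V), (⇑toEquiv) '' Q ∈ X.Cubes n ↔ Q ∈ X.Cubes n

instance {X : CubicalCplx V} : CoeFun X.Auto fun _ => V → V := ⟨fun g => ⇑g.toEquiv⟩

/-- The graph homomorphism underlying an automorphism. -/
def Auto.toHom {X : CubicalCplx V} (g : X.Auto) : X.G →g X.G :=
  ⟨⇑g.toEquiv, fun {a b} h => (g.adj a b).mpr h⟩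

/-- The displacement function of an automorphism (combinatorial metric). -/
noncomputable def disp (X : CubicalCplx V) (g : X.Auto) (x : V) : ℕ := X.G.dist x (g x)

/-- The translation length `|g|`. -/
noncomputable def transLength (X : CubicalCplx V) (g : X.Auto) : ℕ := sInf (Set.range (X.disp g))

/-- The (vertex set of the) minimal displacement set `Min_X(g)`. -/
noncomputable def MinSet (X : CubicalCplx V) (g : X.Auto) : Set V :=
  { x | X.disp g x = X.transLength g }

/-- A bi-infinite combinatorial geodesic. -/
def IsGeodesicLine (X : CubicalCplx V) (γ : ℤ → V) : Prop :=
  ∀ a b : ℤ, X.G.dist (γ a) (γ b) = (a - b).natAbs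

/-- A walk is a combinatorial geodesic iff its length realizes the distance. -/
def IsGeodesic (X : CubicalCplx V) {x y : V} (p : X.G.Walk x y) : Prop :=
  p.length = X.G.dist x y

/-- A combinatorially hyperbolic automorphism: no fixed vertex, and it acts as a
nontrivial translation on some infinite combinatorial geodesic. -/
def IsHyperbolic (X : CubicalCplx V) (g : X.Auto) : Prop :=
  (∀ v : V, g v ≠ v) ∧
    ∃ γ : ℤ → V, X.IsGeodesicLine γ ∧ ∃ k : ℤ, k ≠ 0 ∧ ∀ n : ℤ, g (γ n) = γ (n + k)

/-- Two edges are elementary parallel if they are disjoint edges of a common square. -/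
def ElemParallel (X : CubicalCplx V) (e f : Sym2 V) : Prop :=
  e ∈ X.G.edgeSet ∧ f ∈ X.G.edgeSet ∧ (∀ u, u ∈ e → u ∉ f) ∧
    ∃ Q ∈ X.Cubes 2, (∀ u, u ∈ e → u ∈ Q) ∧ ∀ u, u ∈ f → u ∈ Q

/-- Parallelism: the equivalence relation generated by elementary parallelism. -/
def Parallel (X : CubicalCplx V) : Sym2 V → Sym2 V → Prop :=
  Relation.EqvGen X.ElemParallel

def wallSetoid (X : CubicalCplx V) : Setoid X.G.edgeSet where
  r e f := X.Parallel e.1 f.1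
  iseqv := ⟨fun e => Relation.EqvGen.refl e.1,
    fun h => Relation.EqvGen.symm _ _ h,
    fun h h' => Relation.EqvGen.trans _ _ _ h h'⟩

/-- Walls (equivalently, hyperplanes) of a cubical complex. -/
def Wall (X : CubicalCplx V) := Quotient X.wallSetoid

open Classical in
/-- The number of times a walk crosses edges dual to the wall `w`. -/
noncomputable def crossWall (X : CubicalCplx V) (w : X.Wall) {x y : V}
    (p : X.G.Walk x y) : ℕ :=
  p.edges.countP fun f =>
    decide (∃ h : f ∈ X.G.edgeSet, Quotient.mk X.wallSetoid ⟨f, h⟩ = w)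

/-- The wall `w` separates `x` and `y` if every edge path from `x` to `y`
crosses it an odd number of times. -/
def WallSeparates (X : CubicalCplx V) (w : X.Wall) (x y : V) : Prop :=
  ∀ p : X.G.Walk x y, Odd (X.crossWall w p)

open Classical in
/-- The number of times a walk crosses edges parallel to the edge `e`. -/
noncomputable def crossCount (X : CubicalCplx V) (e : Sym2 V) {x y : V}
    (p : X.G.Walk x y) : ℕ :=
  p.edges.countP fun f => decide (X.Parallel e f)

/-- `x` and `y` lie on the same side (in the same halfspace) of the wall of `e`. -/
def SameSide (X : CubicalCplx V) (e : Sym2 V) (x y : V) : Prop :=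
  ∃ p : X.G.Walk x y, Even (X.crossCount e p)

/-- `f` has an inversion along the wall of the edge `e`: it preserves the wall
and swaps the two halfspaces. -/
def HasInversion (X : CubicalCplx V) (f : V → V) (e : Sym2 V) : Prop :=
  e ∈ X.G.edgeSet ∧ X.Parallel e (e.map f) ∧ ∀ x : V, ¬ X.SameSide e x (f x)

end CubicalCplx



section AuxStmt0

variable {V : Type*}

/-- Distance is preserved by an adjacency-preserving permutation. -/
lemma auxStmt0_dist_perm {G : SimpleGraph V} (hconn : G.Connected) (e : V ≃ V)
    (he : ∀ a b, G.Adj (e a) (e b) ↔ G.Adj a b) (x y : V) :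
    G.dist (e x) (e y) = G.dist x y := by
  have key : ∀ (f : V ≃ V), (∀ a b, G.Adj (f a) (f b) ↔ G.Adj a b) →
      ∀ x y, G.dist (f x) (f y) ≤ G.dist x y := by
    intro f hf x y
    obtain ⟨p, hp⟩ := hconn.exists_walk_length_eq_dist x y
    have := SimpleGraph.dist_le (p.map ⟨f, fun h => (hf _ _).mpr h⟩)
    rwa [Walk.length_map, hp] at this
  refine le_antisymm (key e he x y) ?_
  have hsymm : ∀ a b, G.Adj (e.symm a) (e.symm b) ↔ G.Adj a b := by
    intro a b
    conv_rhs => rw [← e.apply_symm_apply a, ← e.apply_symm_apply b]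
    exact (he _ _).symm
  have := key e.symm hsymm (e x) (e y)
  simpa using this

/-- Distances from an interior vertex of a walk to its endpoints. -/
lemma auxStmt0_getVert {G : SimpleGraph V} (hconn : G.Connected) :
    ∀ {x y : V} (p : G.Walk x y) (i : ℕ),
      G.dist x (p.getVert i) ≤ i ∧ G.dist (p.getVert i) y ≤ p.length - i := by
  intro x y p
  induction p with
  | nil =>
    intro i
    constructor <;> simp [Walk.getVert, SimpleGraph.dist_self]
  | @cons x x' y h q ih =>
    intro i
    cases i with
    | zero =>
      refine ⟨by simp [SimpleGraph.dist_self], ?_⟩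
      simpa using SimpleGraph.dist_le (Walk.cons h q)
    | succ i =>
      have hgv : (Walk.cons h q).getVert (i + 1) = q.getVert i := rfl
      rw [hgv]
      obtain ⟨h1, h2⟩ := ih i
      constructor
      · have htri := hconn.dist_triangle (u := x) (v := x') (w := q.getVert i)
        have hd1 : G.dist x x' = 1 := SimpleGraph.dist_eq_one_iff_adj.mpr h
        omega
      · have : (Walk.cons h q).length = q.length + 1 := by simp
        omega


/-- Key abstract lemma: a periodic path which is geodesic on a fundamental domain,
with period a permutation realizing minimal displacement `L`, is an `L`-local geodesic. -/
lemma auxStmt0_main {G : SimpleGraph V} (hconn : G.Connected) (e : V ≃ V)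
    (hadj : ∀ a b, G.Adj (e a) (e b) ↔ G.Adj a b) (L : ℕ) (hLpos : 0 < L)
    (hLle : ∀ x, L ≤ G.dist x (e x)) (γ : ℤ → V)
    (htrans : ∀ m : ℤ, γ (m + (L : ℤ)) = e (γ m))
    (hadjsucc : ∀ i : ℕ, i < L → G.Adj (γ (i : ℤ)) (γ ((i : ℤ) + 1)))
    (hlow : ∀ i j : ℕ, i ≤ j → j ≤ L → (j - i : ℕ) ≤ G.dist (γ (i : ℤ)) (γ (j : ℤ))) :
    ∀ a b : ℤ, a ≤ b → b - a ≤ (L : ℤ) → G.dist (γ a) (γ b) = (b - a).toNat := by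
  have hadj1' : ∀ a b, G.Adj (e.symm a) (e.symm b) ↔ G.Adj a b := by
    intro a b
    conv_rhs => rw [← e.apply_symm_apply a, ← e.apply_symm_apply b]
    exact (hadj _ _).symm
  -- adjacency is preserved by all integer powers of `e`
  have hadjpow : ∀ q : ℤ, ∀ a b, G.Adj ((e ^ q) a) ((e ^ q) b) ↔ G.Adj a b := by
    intro q
    induction q using Int.induction_on with
    | zero => simp
    | succ n ih =>
      intro a b
      have h1 : ((n : ℤ) + 1) = 1 + n := by ring
      rw [h1, zpow_add, zpow_one]
      have h2 : ∀ c : V, (e * e ^ (n : ℤ)) c = e ((e ^ (n : ℤ)) c) := fun c => rfl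
      rw [h2, h2, hadj]
      exact ih a b
    | pred n ih =>
      intro a b
      have h1 : (-(n : ℤ) - 1) = -1 + -(n : ℤ) := by ring
      rw [h1, zpow_add, zpow_neg_one]
      have h2 : ∀ c : V, (e⁻¹ * e ^ (-(n : ℤ))) c = e.symm ((e ^ (-(n : ℤ))) c) := fun c => rfl
      rw [h2, h2, hadj1']
      exact ih a b
  have hdist1 : ∀ x y, G.dist (e x) (e y) = G.dist x y := auxStmt0_dist_perm hconn e hadj
  have hdistpow : ∀ (q : ℤ) (x y : V), G.dist ((e ^ q) x) ((e ^ q) y) = G.dist x y :=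
    fun q => auxStmt0_dist_perm hconn _ (hadjpow q)
  -- reduction to the fundamental domain
  have hred : ∀ (q m : ℤ), γ (m + q * (L : ℤ)) = (e ^ q) (γ m) := by
    intro q
    induction q using Int.induction_on with
    | zero => intro m; simp
    | succ n ih =>
      intro m
      have h1 : m + ((n : ℤ) + 1) * (L : ℤ) = (m + n * (L : ℤ)) + (L : ℤ) := by ring
      rw [h1, htrans, ih]
      have h2 : ((n : ℤ) + 1) = 1 + n := by ring
      rw [h2, zpow_add, zpow_one]
      rfl
    | pred n ih =>
      intro m
      have h2 := htrans (m + (-(n : ℤ) - 1) * (L : ℤ))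
      have h1 : (m + (-(n : ℤ) - 1) * (L : ℤ)) + (L : ℤ) = m + (-(n : ℤ)) * (L : ℤ) := by
        ring
      rw [h1, ih] at h2
      have h3 : γ (m + (-(n : ℤ) - 1) * (L : ℤ)) = e.symm ((e ^ (-(n : ℤ))) (γ m)) := by
        rw [h2]; exact (e.symm_apply_apply _).symm
      rw [h3]
      have h4 : (-(n : ℤ) - 1) = -1 + -(n : ℤ) := by ring
      rw [h4, zpow_add, zpow_neg_one]
      rfl
  have hnat : ∀ m : ℤ, ∃ (q : ℤ) (r : ℕ), r < L ∧ m = (r : ℤ) + q * (L : ℤ) := by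
    intro m
    have hL0 : (L : ℤ) ≠ 0 := by exact_mod_cast hLpos.ne'
    obtain ⟨q, r', heq, h2, h1⟩ : ∃ q r' : ℤ, m = q * (L : ℤ) + r' ∧ 0 ≤ r' ∧ r' < L :=
      ⟨m / (L : ℤ), m % (L : ℤ), by rw [mul_comm]; exact (Int.mul_ediv_add_emod m (L : ℤ)).symm,
        Int.emod_nonneg m hL0, Int.emod_lt_of_pos m (by exact_mod_cast hLpos)⟩
    exact ⟨q, r'.toNat, by omega, by omega⟩
  -- all consecutive vertices of γ are adjacent
  have hA : ∀ m : ℤ, G.Adj (γ m) (γ (m + 1)) := by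
    intro m
    obtain ⟨q, r, hrL, hm⟩ := hnat m
    have e1 : γ m = (e ^ q) (γ (r : ℤ)) := by rw [hm]; exact hred q r
    have e2 : γ (m + 1) = (e ^ q) (γ ((r : ℤ) + 1)) := by
      have h : m + 1 = ((r : ℤ) + 1) + q * (L : ℤ) := by omega
      rw [h]; exact hred q _
    rw [e1, e2, hadjpow q]
    exact hadjsucc r hrL
  -- upper bound along γ
  have hU : ∀ (m : ℤ) (k : ℕ), G.dist (γ m) (γ (m + (k : ℤ))) ≤ k := by
    intro m k
    induction k with
    | zero => simp [SimpleGraph.dist_self]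
    | succ k ih =>
      have htri := hconn.dist_triangle (u := γ m) (v := γ (m + (k : ℤ)))
        (w := γ (m + ((k + 1 : ℕ) : ℤ)))
      have hadjk : G.dist (γ (m + (k : ℤ))) (γ (m + ((k + 1 : ℕ) : ℤ))) = 1 := by
        rw [SimpleGraph.dist_eq_one_iff_adj]
        have h : (m + ((k + 1 : ℕ) : ℤ)) = (m + (k : ℤ)) + 1 := by push_cast; ring
        rw [h]
        exact hA (m + (k : ℤ))
      omega
  -- exact distances on the fundamental domain
  have step1 : ∀ i j : ℕ, i ≤ j → j ≤ L → G.dist (γ (i : ℤ)) (γ (j : ℤ)) = j - i := by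
    intro i j hij hjL
    have hle : G.dist (γ (i : ℤ)) (γ (j : ℤ)) ≤ j - i := by
      have h := hU (i : ℤ) (j - i)
      have hcast : (i : ℤ) + ((j - i : ℕ) : ℤ) = (j : ℤ) := by omega
      rwa [hcast] at h
    have hge := hlow i j hij hjL
    omega
  -- the main computation
  intro a b hab hbL
  set k : ℕ := (b - a).toNat with hk
  have hkL : k ≤ L := by omega
  have hbk : b = a + (k : ℤ) := by omega
  obtain ⟨q, r, hrL, hm⟩ := hnat a
  have e1 : γ a = (e ^ q) (γ (r : ℤ)) := by rw [hm]; exact hred q r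
  have e2 : γ b = (e ^ q) (γ ((r + k : ℕ) : ℤ)) := by
    have h : b = ((r + k : ℕ) : ℤ) + q * (L : ℤ) := by push_cast; omega
    rw [h]; exact hred q _
  rw [e1, e2, hdistpow]
  by_cases hc : r + k ≤ L
  · have h := step1 r (r + k) (by omega) hc
    omega
  · push_neg at hc
    have hub : G.dist (γ (r : ℤ)) (γ ((r + k : ℕ) : ℤ)) ≤ k := by
      have h := hU (r : ℤ) k
      have hcast : (r : ℤ) + (k : ℤ) = ((r + k : ℕ) : ℤ) := by push_cast; ring
      rwa [hcast] at h
    have hlb : L ≤ G.dist (γ (r : ℤ)) (γ ((r : ℤ) + (L : ℤ))) := by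
      rw [htrans]
      exact hLle (γ (r : ℤ))
    have htri := hconn.dist_triangle (u := γ (r : ℤ)) (v := γ ((r + k : ℕ) : ℤ))
      (w := γ ((r : ℤ) + (L : ℤ)))
    have hlast : G.dist (γ ((r + k : ℕ) : ℤ)) (γ ((r : ℤ) + (L : ℤ))) = r - (r + k - L) := by
      have hseq : ((r + k : ℕ) : ℤ) = ((r + k - L : ℕ) : ℤ) + (L : ℤ) := by omega
      rw [hseq, htrans, htrans, hdist1]
      exact step1 (r + k - L) r (by omega) (by omega)
    omega

end AuxStmt0

/-- Lemma 3.1. Let `g` be a combinatorially hyperbolic isometry of a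
simply connected cubical complex `X`, `v` a vertex realizing `|g|`, `α` a combinatorial
geodesic from `v` to `g v`, and `γ : ℤ → V` the bi-infinite concatenation of the paths
`gⁿ(α)`.  Then `γ` is a `|g|`-local geodesic and all its vertices lie in `Min_X(g)`. -/
theorem stmt0 {V : Type*} (X : CubicalCplx V) (hconn : X.G.Connected)
    (hsc : X.SimplyConnected) (g : X.Auto) (hg : X.IsHyperbolic g)
    (v : V) (hv : v ∈ X.MinSet g) (α : X.G.Walk v (g v)) (hα : X.IsGeodesic α)
    (γ : ℤ → V)
    (hγtrans : ∀ m : ℤ, γ (m + (X.transLength g : ℤ)) = g (γ m))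
    (hγα : ∀ i : ℕ, i ≤ X.transLength g → γ (i : ℤ) = α.getVert i) :
    (∀ a b : ℤ, (a - b).natAbs ≤ X.transLength g →
      X.G.dist (γ a) (γ b) = (a - b).natAbs) ∧
    ∀ m : ℤ, γ m ∈ X.MinSet g := by
  classical
  -- bridge the definitional layers
  have htrans' : ∀ m : ℤ, γ (m + (X.transLength g : ℤ)) = g.toEquiv (γ m) := hγtrans
  have hvdist : X.G.dist v (g.toEquiv v) = X.transLength g := hv
  have hlen : α.length = X.transLength g := hα.trans hvdist
  have hLle : ∀ x : V, X.transLength g ≤ X.G.dist x (g.toEquiv x) :=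
    fun x => Nat.sInf_le ⟨x, rfl⟩
  have hfix : ∀ x : V, g.toEquiv x ≠ x := hg.1
  have hLpos : 0 < X.transLength g := by
    by_contra h
    have h0 : X.G.dist v (g.toEquiv v) = 0 := by omega
    have hvv : v = g.toEquiv v := hconn.dist_eq_zero_iff.mp h0
    exact hfix v hvv.symm
  have hadjsucc : ∀ i : ℕ, i < X.transLength g →
      X.G.Adj (γ (i : ℤ)) (γ ((i : ℤ) + 1)) := by
    intro i hi
    have g1 : γ (i : ℤ) = α.getVert i := hγα i (le_of_lt hi)
    have g2 : γ ((i : ℤ) + 1) = α.getVert (i + 1) := by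
      have h : ((i : ℤ) + 1) = ((i + 1 : ℕ) : ℤ) := by push_cast; ring
      rw [h]; exact hγα (i + 1) hi
    rw [g1, g2]
    exact α.adj_getVert_succ (by rw [hlen]; exact hi)
  have hlow : ∀ i j : ℕ, i ≤ j → j ≤ X.transLength g →
      (j - i : ℕ) ≤ X.G.dist (γ (i : ℤ)) (γ (j : ℤ)) := by
    intro i j hij hjL
    have g1 : γ (i : ℤ) = α.getVert i := hγα i (hij.trans hjL)
    have g2 : γ (j : ℤ) = α.getVert j := hγα j hjL
    obtain ⟨h1, -⟩ := auxStmt0_getVert hconn α i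
    obtain ⟨-, h2⟩ := auxStmt0_getVert hconn α j
    have htri1 := hconn.dist_triangle (u := v) (v := α.getVert i) (w := g.toEquiv v)
    have htri2 := hconn.dist_triangle (u := α.getVert i) (v := α.getVert j)
      (w := g.toEquiv v)
    rw [g1, g2]
    omega
  have main := auxStmt0_main hconn g.toEquiv g.adj (X.transLength g) hLpos hLle γ
    htrans' hadjsucc hlow
  constructor
  · intro a b hab
    rcases le_total a b with h | h
    · have hmain := main a b h (by omega)
      have hn : (a - b).natAbs = (b - a).toNat := by omega
      rw [hn]; exact hmain
    · have hmain := main b a h (by omega)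
      have hn : (a - b).natAbs = (a - b).toNat := by omega
      rw [SimpleGraph.dist_comm, hn]
      exact hmain
  · intro m
    have key : X.G.dist (γ m) (γ (m + (X.transLength g : ℤ))) = X.transLength g := by
      have h2 := main m (m + (X.transLength g : ℤ)) (by omega) (by omega)
      rw [h2]; omega
    rw [htrans' m] at key
    show X.disp g (γ m) = X.transLength g
    exact key
end

section
/- Let g be a combinatorially hyperbolic isometry of a CAT(0) cubical complex X, and suppose v, w ∈ Min_X(g) are joined by a geodesic γ not contained in Min_X(g), chosen with d(v, w) minimal. Let α be a geodesic from v to g(v) inside Min_X(g). Then γ and g(γ) are either disjoint or meet only in vertices that already belong to Min_X(g); in particular, under the minimality assumption, γ ∩ g(γ) contains no vertex outside Min_X(g). -/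
open SimpleGraph

section Aux

variable {V : Type*}

/-- An automorphism preserves the combinatorial distance. -/
lemma auto_dist_eq {X : CubicalCplx V} (hc : X.G.Connected) (g : X.Auto) (x y : V) :
    X.G.dist (g x) (g y) = X.G.dist x y := by
  have key : ∀ (f : X.G →g X.G) (x y : V), X.G.dist (f x) (f y) ≤ X.G.dist x y := by
    intro f x y
    obtain ⟨p, hp⟩ := hc.exists_walk_length_eq_dist x y
    calc X.G.dist (f x) (f y) ≤ (p.map f).length := SimpleGraph.dist_le _
      _ = X.G.dist x y := by rw [SimpleGraph.Walk.length_map, hp]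
  refine le_antisymm (key g.toHom x y) ?_
  have hf : ∀ {a b : V}, X.G.Adj a b → X.G.Adj (g.toEquiv.symm a) (g.toEquiv.symm b) := by
    intro a b h
    exact (g.adj _ _).mp (by simpa using h)
  have h2 := key ⟨⇑g.toEquiv.symm, hf⟩ (g x) (g y)
  have e1 : (⟨⇑g.toEquiv.symm, hf⟩ : X.G →g X.G) (g x) = g.toEquiv.symm (g.toEquiv x) := rfl
  have e2 : (⟨⇑g.toEquiv.symm, hf⟩ : X.G →g X.G) (g y) = g.toEquiv.symm (g.toEquiv y) := rfl
  rw [e1, e2, Equiv.symm_apply_apply, Equiv.symm_apply_apply] at h2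
  exact h2

/-- Splitting a geodesic at a point of its support. -/
lemma geod_point [DecidableEq V] {G : SimpleGraph V} (hc : G.Connected) {v w : V} (p : G.Walk v w)
    (hp : p.length = G.dist v w) {u : V} (hu : u ∈ p.support) :
    (p.takeUntil u hu).length = G.dist v u ∧ (p.dropUntil u hu).length = G.dist u w ∧
      G.dist v u + G.dist u w = G.dist v w := by
  have h1 : G.dist v u ≤ (p.takeUntil u hu).length := SimpleGraph.dist_le _
  have h2 : G.dist u w ≤ (p.dropUntil u hu).length := SimpleGraph.dist_le _
  have h3 : (p.takeUntil u hu).length + (p.dropUntil u hu).length = p.length := by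
    rw [← SimpleGraph.Walk.length_append, p.take_spec hu]
  have h4 := hc.dist_triangle (u := v) (v := u) (w := w)
  omega

/-- Two points on a common geodesic: the distances behave additively. -/
lemma geod_two [DecidableEq V] {G : SimpleGraph V} (hc : G.Connected) {v w : V} (p : G.Walk v w)
    (hp : p.length = G.dist v w) {z u : V} (hz : z ∈ p.support) (hu : u ∈ p.support) :
    G.dist v z + G.dist z u = G.dist v u ∨ G.dist v u + G.dist u z = G.dist v z := by
  obtain ⟨hvu, huw, hsum⟩ := geod_point hc p hp hu
  have hz' : z ∈ (p.takeUntil u hu).support ∨ z ∈ (p.dropUntil u hu).support := by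
    rw [← SimpleGraph.Walk.mem_support_append_iff, p.take_spec hu]; exact hz
  rcases hz' with h | h
  · exact Or.inl (geod_point hc (p.takeUntil u hu) hvu h).2.2
  · right
    have c := (geod_point hc (p.dropUntil u hu) huw h).2.2
    obtain ⟨_, _, c2⟩ := geod_point hc p hp hz
    omega

end Aux

/-- Let `g` be a combinatorially hyperbolic isometry of a CAT(0)
cubical complex `X`, let `v, w ∈ Min_X(g)` be joined by a geodesic `p` not contained
in `Min_X(g)`, chosen with `d(v, w)` minimal, and let `α` be a geodesic from `v` to
`g v` inside `Min_X(g)`.  Then every common vertex of `p` and `g(p)` belongs to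
`Min_X(g)`. -/
theorem stmt16 {V : Type*} (X : CubicalCplx V) (hX : X.IsCAT0) (g : X.Auto)
    (hg : X.IsHyperbolic g)
    (v w : V) (hv : v ∈ X.MinSet g) (hw : w ∈ X.MinSet g)
    (p : X.G.Walk v w) (hp : X.IsGeodesic p)
    (hout : ∃ z ∈ p.support, z ∉ X.MinSet g)
    (hmin : ∀ v' w' : V, v' ∈ X.MinSet g → w' ∈ X.MinSet g →
      (∃ q : X.G.Walk v' w', X.IsGeodesic q ∧ ∃ z ∈ q.support, z ∉ X.MinSet g) →
      X.G.dist v w ≤ X.G.dist v' w')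
    (α : X.G.Walk v (g v)) (hα : X.IsGeodesic α)
    (hαmin : ∀ z ∈ α.support, z ∈ X.MinSet g) :
    ∀ u : V, u ∈ p.support → u ∈ (p.map g.toHom).support → u ∈ X.MinSet g := by
  classical
  intro u hu hu'
  obtain ⟨hc, -, -⟩ := hX
  rw [SimpleGraph.Walk.support_map, List.mem_map] at hu'
  obtain ⟨z, hz, hgz⟩ := hu'
  have hgz' : g z = u := hgz
  have hiso : ∀ x y, X.G.dist (g x) (g y) = X.G.dist x y := auto_dist_eq hc g
  -- the displacement of `u` equals `dist z u`
  have hdu : X.disp g u = X.G.dist z u := by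
    show X.G.dist u (g u) = X.G.dist z u
    rw [← hgz', hiso z (g z)]
  -- `dist (g v) u = dist v z`
  have hgvu : X.G.dist (g v) u = X.G.dist v z := by rw [← hgz', hiso]
  -- the translation length
  have hvgv : X.G.dist v (g v) = X.transLength g := hv
  have hlow : X.transLength g ≤ X.disp g u := Nat.sInf_le (Set.mem_range_self u)
  -- triangle inequalities
  have t1 : X.G.dist v u ≤ X.G.dist v (g v) + X.G.dist (g v) u := hc.dist_triangle
  have t2 : X.G.dist (g v) u ≤ X.G.dist (g v) v + X.G.dist v u := hc.dist_triangle
  have hcm : X.G.dist (g v) v = X.G.dist v (g v) := SimpleGraph.dist_comm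
  have hcm2 : X.G.dist u z = X.G.dist z u := SimpleGraph.dist_comm
  have h := geod_two hc p hp hz hu
  show X.disp g u = X.transLength g
  omega
end
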